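/- arXiv:2205.08700 — 2 statements merged into one kernel-verified Lean document; each statement's English description precedes it below -/
import Mathlib

section
/- If A, B, C ∈ 𝔰𝔩(4,ℝ) are skew-symmetric and pairwise-commuting, then the metric induced on 𝔤_{A,B,C} is flat: the curvature R(X,Y)Z := ∇_X(∇_Y Z) − ∇_Y(∇_X Z) − ∇_{[X,Y]}Z vanishes for all X, Y, Z ∈ ℝ⁷. -/
open Matrix

noncomputable section

/-- Standard basis vector `e_{i+1}` of `ℝ⁷` (index `0 ↔ e₁`, …, `6 ↔ e₇`). -/
def E (i : Fin 7) : Fin 7 → ℝ := Pi.single i 1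

/-- The standard inner product on `ℝ⁷` for which `e₁, …, e₇` is orthonormal. -/
def inner7 (X Y : Fin 7 → ℝ) : ℝ := ∑ i, X i * Y i

/-- The component of `X ∈ ℝ⁷` in `𝔫 = span{e₃,e₄,e₅,e₆} ≅ ℝ⁴`. -/
def nPart (X : Fin 7 → ℝ) : Fin 4 → ℝ := fun i => X ⟨i.val + 2, by omega⟩

/-- The inclusion `ℝ⁴ ≅ 𝔫 = span{e₃,e₄,e₅,e₆} ⊆ ℝ⁷`. -/
def emb (w : Fin 4 → ℝ) : Fin 7 → ℝ :=
  fun j => if h : 2 ≤ j.val ∧ j.val ≤ 5 then w ⟨j.val - 2, by omega⟩ else 0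

/-- For `X = λ₁e₁ + λ₂e₂ + λ₇e₇ (+ 𝔫-part)`, the matrix `M_X = λ₁B + λ₂C + λ₇A`. -/
def MX (A B C : Matrix (Fin 4) (Fin 4) ℝ) (X : Fin 7 → ℝ) : Matrix (Fin 4) (Fin 4) ℝ :=
  X 0 • B + X 1 • C + X 6 • A

/-- The bilinear antisymmetric bracket on `ℝ⁷` determined by `[𝔞,𝔞] = 0`, `[𝔫,𝔫] = 0`,
`[e₇,v] = Av`, `[e₁,v] = Bv`, `[e₂,v] = Cv` for `v ∈ 𝔫` and `[v,eₖ] = −[eₖ,v]`,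
where `𝔞 = span{e₁,e₂,e₇}` and `𝔫 = span{e₃,e₄,e₅,e₆}`. -/
def bracket (A B C : Matrix (Fin 4) (Fin 4) ℝ) (X Y : Fin 7 → ℝ) : Fin 7 → ℝ :=
  emb ((MX A B C X).mulVec (nPart Y) - (MX A B C Y).mulVec (nPart X))

/-- The symmetric part `S(M) = (M + Mᵀ)/2` of a matrix. -/
def symPart (M : Matrix (Fin 4) (Fin 4) ℝ) : Matrix (Fin 4) (Fin 4) ℝ :=
  (1/2 : ℝ) • (M + Mᵀ)

/-- The antisymmetric part `A(M) = (M − Mᵀ)/2` of a matrix. -/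
def skewPart (M : Matrix (Fin 4) (Fin 4) ℝ) : Matrix (Fin 4) (Fin 4) ℝ :=
  (1/2 : ℝ) • (M - Mᵀ)

/-- `𝔞 = span{e₁,e₂,e₇} ⊆ ℝ⁷`. -/
def aSub : Submodule ℝ (Fin 7 → ℝ) := Submodule.span ℝ {E 0, E 1, E 6}

/-- `𝔫 = span{e₃,e₄,e₅,e₆} ⊆ ℝ⁷`. -/
def nSub : Submodule ℝ (Fin 7 → ℝ) := Submodule.span ℝ {E 2, E 3, E 4, E 5}

/-- `∇` satisfies the Koszul formula
`⟨∇_X Y, Z⟩ = ½(⟨[X,Y],Z⟩ − ⟨[Y,Z],X⟩ + ⟨[Z,X],Y⟩)`. -/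
def IsKoszul (A B C : Matrix (Fin 4) (Fin 4) ℝ)
    (nabla : (Fin 7 → ℝ) → (Fin 7 → ℝ) → (Fin 7 → ℝ)) : Prop :=
  ∀ X Y Z, inner7 (nabla X Y) Z =
    (1/2 : ℝ) * (inner7 (bracket A B C X Y) Z - inner7 (bracket A B C Y Z) X
      + inner7 (bracket A B C Z X) Y)

/-- The wedge `e^{(i+1)(j+1)(k+1)}` of dual basis elements of `(ℝ⁷)*`, as a 3-form. -/
def w3 (i j k : Fin 7) (X Y Z : Fin 7 → ℝ) : ℝ :=
  Matrix.det !![X i, X j, X k; Y i, Y j, Y k; Z i, Z j, Z k]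

/-- The wedge `e^{(i+1)(j+1)(k+1)(l+1)}` of dual basis elements of `(ℝ⁷)*`, as a 4-form. -/
def w4 (i j k l : Fin 7) (X Y Z W : Fin 7 → ℝ) : ℝ :=
  Matrix.det !![X i, X j, X k, X l; Y i, Y j, Y k, Y l; Z i, Z j, Z k, Z l;
    W i, W j, W k, W l]

/-- The `G₂`-structure 3-form `φ = e¹²⁷ + e³⁴⁷ + e⁵⁶⁷ + e¹³⁵ − e¹⁴⁶ − e²³⁶ − e²⁴⁵`. -/
def phi (X Y Z : Fin 7 → ℝ) : ℝ :=
  w3 0 1 6 X Y Z + w3 2 3 6 X Y Z + w3 4 5 6 X Y Z + w3 0 2 4 X Y Z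
    - w3 0 3 5 X Y Z - w3 1 2 5 X Y Z - w3 1 3 4 X Y Z

/-- The dual 4-form `ψ = e³⁴⁵⁶ + e¹²⁵⁶ + e¹²³⁴ − e²⁴⁶⁷ + e²³⁵⁷ + e¹⁴⁵⁷ + e¹³⁶⁷`. -/
def psi (X Y Z W : Fin 7 → ℝ) : ℝ :=
  w4 2 3 4 5 X Y Z W + w4 0 1 4 5 X Y Z W + w4 0 1 2 3 X Y Z W - w4 1 3 5 6 X Y Z W
    + w4 1 2 4 6 X Y Z W + w4 0 3 4 6 X Y Z W + w4 0 2 5 6 X Y Z W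

/-- `T : ℝ⁷ → ℝ⁷` is a full torsion tensor of `(𝔤_{A,B,C}, φ)`: `∇_X φ = ι_{T(X)} ψ`
for all `X`, where `(∇_X φ)(Y,Z,W) = −φ(∇_X Y,Z,W) − φ(Y,∇_X Z,W) − φ(Y,Z,∇_X W)`
and `(ι_V ψ)(Y,Z,W) = ψ(V,Y,Z,W)`. -/
def IsFullTorsion (nabla : (Fin 7 → ℝ) → (Fin 7 → ℝ) → (Fin 7 → ℝ))
    (T : (Fin 7 → ℝ) → (Fin 7 → ℝ)) : Prop :=
  ∀ X Y Z W, -phi (nabla X Y) Z W - phi Y (nabla X Z) W - phi Y Z (nabla X W)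
    = psi (T X) Y Z W

/-- `T(X,Y) := ⟨T(X),Y⟩`. -/
def Tbil (T : (Fin 7 → ℝ) → (Fin 7 → ℝ)) (X Y : Fin 7 → ℝ) : ℝ := inner7 (T X) Y

/-- The divergence of `T`, determined by
`⟨div T, e_j⟩ = −∑ᵢ T(∇_{e_i}e_i, e_j) − ∑ᵢ T(e_i, ∇_{e_i}e_j)`. -/
def divT (nabla : (Fin 7 → ℝ) → (Fin 7 → ℝ) → (Fin 7 → ℝ))
    (T : (Fin 7 → ℝ) → (Fin 7 → ℝ)) : Fin 7 → ℝ :=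
  fun j => -∑ i, Tbil T (nabla (E i) (E i)) (E j) - ∑ i, Tbil T (E i) (nabla (E i) (E j))

end

noncomputable section

/-- The curvature `R(X,Y)Z = ∇_X(∇_Y Z) − ∇_Y(∇_X Z) − ∇_{[X,Y]}Z`. -/
def curv (A B C : Matrix (Fin 4) (Fin 4) ℝ)
    (nabla : (Fin 7 → ℝ) → (Fin 7 → ℝ) → (Fin 7 → ℝ))
    (X Y Z : Fin 7 → ℝ) : Fin 7 → ℝ :=
  nabla X (nabla Y Z) - nabla Y (nabla X Z) - nabla (bracket A B C X Y) Z

end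

/-!
Proof idea: because every `M_X` is skew-symmetric, the Koszul formula collapses to
`∇_X Y = M_X (Y_𝔫)`. So `∇_X` kills `𝔞`, acts on `𝔫` by `M_X`, and depends on `X` only through its
`𝔞`-component. Then `R(X,Y) = [M_X, M_Y] - M_{[X,Y]}`: the commutator vanishes because `A`, `B`, `C`
commute, and `M_{[X,Y]} = 0` because `[X,Y] ∈ 𝔫`.
-/

lemma dotProduct_mulVec_eq_neg_of_transpose_eq_neg {n R : Type*} [Fintype n] [CommRing R]
    {M : Matrix n n R} (hM : Mᵀ = -M) (v w : n → R) :
    v ⬝ᵥ M *ᵥ w = -(w ⬝ᵥ M *ᵥ v) := by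
  rw [← dotProduct_transpose_mulVec, hM, neg_mulVec, dotProduct_neg]

lemma nPart_emb (w : Fin 4 → ℝ) : nPart (emb w) = w := by
  funext i; fin_cases i <;> rfl

lemma emb_zero : emb 0 = 0 := by
  funext j; simp [emb]

lemma inner7_emb (w : Fin 4 → ℝ) (Z : Fin 7 → ℝ) : inner7 (emb w) Z = w ⬝ᵥ nPart Z := by
  simp only [inner7, dotProduct, Fin.sum_univ_seven, Fin.sum_univ_four]
  simp [emb, nPart]

lemma inner7_E (v : Fin 7 → ℝ) (j : Fin 7) : inner7 v (E j) = v j := by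
  simp [inner7, E, Pi.single_apply]

lemma eq_of_inner7_E_eq {v w : Fin 7 → ℝ} (h : ∀ j, inner7 v (E j) = inner7 w (E j)) : v = w := by
  funext j; simpa only [inner7_E] using h j

section MX

variable {A B C : Matrix (Fin 4) (Fin 4) ℝ}

lemma MX_transpose (hA : Aᵀ = -A) (hB : Bᵀ = -B) (hC : Cᵀ = -C) (X : Fin 7 → ℝ) :
    (MX A B C X)ᵀ = -MX A B C X := by
  simp only [MX, transpose_add, transpose_smul, hA, hB, hC, smul_neg, neg_add]

lemma MX_emb (w : Fin 4 → ℝ) : MX A B C (emb w) = 0 := by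
  simp [MX, emb]

lemma MX_bracket (X Y : Fin 7 → ℝ) : MX A B C (bracket A B C X Y) = 0 :=
  MX_emb _

lemma MX_mul_comm (hAB : A * B = B * A) (hAC : A * C = C * A) (hBC : B * C = C * B)
    (X Y : Fin 7 → ℝ) : MX A B C X * MX A B C Y = MX A B C Y * MX A B C X := by
  simp only [MX, add_mul, mul_add, smul_mul_assoc, mul_smul_comm, hAB, hAC, hBC]
  module

lemma IsKoszul.eq_emb_mulVec (hA : Aᵀ = -A) (hB : Bᵀ = -B) (hC : Cᵀ = -C)
    {nabla : (Fin 7 → ℝ) → (Fin 7 → ℝ) → (Fin 7 → ℝ)} (hK : IsKoszul A B C nabla)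
    (X Y : Fin 7 → ℝ) : nabla X Y = emb (MX A B C X *ᵥ nPart Y) := by
  refine eq_of_inner7_E_eq fun j => ?_
  have skew := fun V => dotProduct_mulVec_eq_neg_of_transpose_eq_neg (MX_transpose hA hB hC V)
  rw [hK]
  simp only [bracket, inner7_emb, dotProduct_comm _ (nPart _), dotProduct_sub]
  rw [skew Y (nPart X), skew (E j) (nPart Y), skew X (nPart Y)]
  ring

end MX

/-- if A, B, C are skew-symmetric and pairwise-commuting then the
metric induced on `𝔤_{A,B,C}` is flat. -/
theorem flat_of_skewSymmetric (A B C : Matrix (Fin 4) (Fin 4) ℝ)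
    (hA : Aᵀ = -A) (hB : Bᵀ = -B) (hC : Cᵀ = -C)
    (hAB : A * B = B * A) (hAC : A * C = C * A) (hBC : B * C = C * B)
    (nabla : (Fin 7 → ℝ) → (Fin 7 → ℝ) → (Fin 7 → ℝ))
    (hK : IsKoszul A B C nabla) :
    ∀ X Y Z : Fin 7 → ℝ, curv A B C nabla X Y Z = 0 := by
  intro X Y Z
  have hn := IsKoszul.eq_emb_mulVec hA hB hC hK
  simp only [curv, hn, nPart_emb, MX_bracket, zero_mulVec, emb_zero, mulVec_mulVec,
    MX_mul_comm hAB hAC hBC X Y, sub_self]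
end

section
/- Let A, B, C ∈ 𝔰𝔩(4,ℝ) be pairwise-commuting, and let T be a full torsion tensor of (𝔤_{A,B,C}, φ), i.e., a linear map T : ℝ⁷ → ℝ⁷ with ∇_X φ = ι_{T(X)}ψ for all X. Then T(X,Y) = 0 whenever X ∈ 𝔞 and Y ∈ 𝔫, and also whenever X ∈ 𝔫 and Y ∈ 𝔞, where T(X,Y) := ⟨T(X),Y⟩. -/
open Matrix

/-!
The involution `negN` of `ℝ⁷` that is the identity on `𝔞` and `-1` on `𝔫` is an isometric
automorphism of the bracket, because `[𝔞, 𝔞] = [𝔫, 𝔫] = 0` and `[𝔞, 𝔫] ⊆ 𝔫`. Every term of `φ` and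
of `ψ` has an even number of indices in `𝔫`, so `negN` also preserves `φ` and `ψ`. By uniqueness
in the Koszul formula `negN` preserves `∇`, and since `V ↦ ι_V ψ` is injective, the full torsion
tensor commutes with `negN`. Together with `T(-X) = -T(X)` this makes `T` map `𝔞` into `𝔞` and `𝔫`
into `𝔫`, which are orthogonal.
-/

lemma inner7_eq_dotProduct (X Y : Fin 7 → ℝ) : inner7 X Y = X ⬝ᵥ Y := rfl

lemma inner7_smul_left (c : ℝ) (X Y : Fin 7 → ℝ) : inner7 (c • X) Y = c * inner7 X Y :=
  smul_dotProduct c X Y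

lemma inner7_smul_right (c : ℝ) (X Y : Fin 7 → ℝ) : inner7 X (c • Y) = c * inner7 X Y :=
  dotProduct_smul c X Y

lemma inner7_comm (X Y : Fin 7 → ℝ) : inner7 X Y = inner7 Y X := dotProduct_comm X Y

lemma inner7_left_injective {U V : Fin 7 → ℝ} (h : ∀ Z, inner7 U Z = inner7 V Z) : U = V := by
  ext j; simpa [inner7_eq_dotProduct, E] using h (E j)

def nSign (i : Fin 7) : ℝ := if 2 ≤ i.val ∧ i.val ≤ 5 then -1 else 1

def negN : (Fin 7 → ℝ) →ₗ[ℝ] (Fin 7 → ℝ) := (diagonal nSign).mulVecLin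

lemma negN_apply (X : Fin 7 → ℝ) (i : Fin 7) : negN X i = nSign i * X i := by
  simp [negN, mulVec_diagonal]

lemma negN_eq_mul (X : Fin 7 → ℝ) : ⇑negN X = fun m => nSign m * X m := funext (negN_apply X)

lemma negN_involutive : Function.Involutive negN := by
  intro X
  ext i; simp only [negN_apply, ← mul_assoc, nSign]; split_ifs <;> norm_num

lemma inner7_negN_left (X Y : Fin 7 → ℝ) : inner7 (negN X) Y = inner7 X (negN Y) := by
  simp only [inner7, negN_apply]; congr 1; ext i; ring

lemma negN_eq_self_of_mem_aSub {X : Fin 7 → ℝ} (hX : X ∈ aSub) : negN X = X := by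
  refine LinearMap.eqOn_span (g := LinearMap.id) ?_ hX
  rintro _ (rfl | rfl | rfl) <;> ext i <;> fin_cases i <;> simp [negN_apply, nSign, E]

lemma negN_eq_neg_of_mem_nSub {X : Fin 7 → ℝ} (hX : X ∈ nSub) : negN X = -X := by
  refine LinearMap.eqOn_span (g := -LinearMap.id) ?_ hX
  rintro _ (rfl | rfl | rfl | rfl) <;> ext i <;> fin_cases i <;> simp [negN_apply, nSign, E]

lemma inner7_eq_zero_of_negN_eq_self_of_negN_eq_neg {U V : Fin 7 → ℝ} (hU : negN U = U)
    (hV : negN V = -V) : inner7 U V = 0 := by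
  have h := inner7_negN_left U V
  rw [hU, hV, inner7_eq_dotProduct, inner7_eq_dotProduct, dotProduct_neg] at h
  rw [inner7_eq_dotProduct]
  linarith

lemma emb_neg (w : Fin 4 → ℝ) : emb (-w) = -emb w := by
  ext i; simp only [emb, Pi.neg_apply]; split_ifs <;> simp

lemma emb_smul (c : ℝ) (w : Fin 4 → ℝ) : emb (c • w) = c • emb w := by
  ext i; simp only [emb, Pi.smul_apply]; split_ifs <;> simp

lemma negN_emb (w : Fin 4 → ℝ) : negN (emb w) = -emb w := by
  ext i; fin_cases i <;> simp [emb, negN_apply, nSign]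

lemma nPart_smul (c : ℝ) (X : Fin 7 → ℝ) : nPart (c • X) = c • nPart X := rfl

lemma nPart_negN (X : Fin 7 → ℝ) : nPart (negN X) = -nPart X := by
  ext i; fin_cases i <;> simp [nPart, negN_apply, nSign]

section Bracket

variable (A B C : Matrix (Fin 4) (Fin 4) ℝ)

lemma MX_smul (c : ℝ) (X : Fin 7 → ℝ) : MX A B C (c • X) = c • MX A B C X := by
  simp only [MX, Pi.smul_apply, smul_eq_mul, smul_add, mul_smul]

lemma MX_negN (X : Fin 7 → ℝ) : MX A B C (negN X) = MX A B C X := by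
  simp [MX, negN_apply, nSign]

lemma bracket_swap (X Y : Fin 7 → ℝ) : bracket A B C Y X = -bracket A B C X Y := by
  rw [bracket, bracket, ← emb_neg, neg_sub]

lemma bracket_smul_left (c : ℝ) (X Y : Fin 7 → ℝ) :
    bracket A B C (c • X) Y = c • bracket A B C X Y := by
  rw [bracket, bracket, MX_smul, nPart_smul, smul_mulVec, mulVec_smul, ← smul_sub, emb_smul]

lemma bracket_smul_right (c : ℝ) (X Y : Fin 7 → ℝ) :
    bracket A B C X (c • Y) = c • bracket A B C X Y := by
  rw [bracket_swap, bracket_smul_left, bracket_swap A B C Y, smul_neg]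

lemma bracket_negN (X Y : Fin 7 → ℝ) :
    bracket A B C (negN X) (negN Y) = negN (bracket A B C X Y) := by
  simp only [bracket, MX_negN, nPart_negN, mulVec_neg, negN_emb, neg_sub_neg, ← emb_neg,
    neg_sub]

end Bracket

lemma det_fin_four (M : Matrix (Fin 4) (Fin 4) ℝ) : M.det =
    M 0 0 * !![M 1 1, M 1 2, M 1 3; M 2 1, M 2 2, M 2 3; M 3 1, M 3 2, M 3 3].det
      - M 0 1 * !![M 1 0, M 1 2, M 1 3; M 2 0, M 2 2, M 2 3; M 3 0, M 3 2, M 3 3].det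
      + M 0 2 * !![M 1 0, M 1 1, M 1 3; M 2 0, M 2 1, M 2 3; M 3 0, M 3 1, M 3 3].det
      - M 0 3 * !![M 1 0, M 1 1, M 1 2; M 2 0, M 2 1, M 2 2; M 3 0, M 3 1, M 3 2].det := by
  simp [det_succ_row_zero, Fin.sum_univ_succ, Fin.succAbove]
  ring

lemma w3_mul_diag (s : Fin 7 → ℝ) (i j k : Fin 7) (X Y Z : Fin 7 → ℝ) :
    w3 i j k (fun m => s m * X m) (fun m => s m * Y m) (fun m => s m * Z m)
      = s i * s j * s k * w3 i j k X Y Z := by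
  simp [w3, det_fin_three]
  ring

lemma w4_mul_diag (s : Fin 7 → ℝ) (i j k l : Fin 7) (X Y Z W : Fin 7 → ℝ) :
    w4 i j k l (fun m => s m * X m) (fun m => s m * Y m) (fun m => s m * Z m)
        (fun m => s m * W m) = s i * s j * s k * s l * w4 i j k l X Y Z W := by
  simp [w4, det_fin_four, det_fin_three]
  ring

lemma w4_smul_left (c : ℝ) (i j k l : Fin 7) (X Y Z W : Fin 7 → ℝ) :
    w4 i j k l (c • X) Y Z W = c * w4 i j k l X Y Z W := by
  simp [w4, det_fin_four]
  ring

lemma phi_smul_left (c : ℝ) (X Y Z : Fin 7 → ℝ) : phi (c • X) Y Z = c * phi X Y Z := by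
  simp [phi, w3, det_fin_three]; ring

lemma phi_smul_mid (c : ℝ) (X Y Z : Fin 7 → ℝ) : phi X (c • Y) Z = c * phi X Y Z := by
  simp [phi, w3, det_fin_three]; ring

lemma phi_smul_right (c : ℝ) (X Y Z : Fin 7 → ℝ) : phi X Y (c • Z) = c * phi X Y Z := by
  simp [phi, w3, det_fin_three]; ring

lemma psi_smul_left (c : ℝ) (X Y Z W : Fin 7 → ℝ) : psi (c • X) Y Z W = c * psi X Y Z W := by
  simp only [psi, w4_smul_left]; ring

lemma phi_negN (X Y Z : Fin 7 → ℝ) : phi (negN X) (negN Y) (negN Z) = phi X Y Z := by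
  simp only [phi, negN_eq_mul, w3_mul_diag]
  norm_num [nSign]

lemma psi_negN (X Y Z W : Fin 7 → ℝ) :
    psi (negN X) (negN Y) (negN Z) (negN W) = psi X Y Z W := by
  simp only [psi, negN_eq_mul, w4_mul_diag]
  norm_num [nSign]

/-- Each of the seven triples of basis vectors below meets exactly one term of `ψ`, and that
term reads off one coordinate of the first argument. -/
lemma psi_left_injective {U V : Fin 7 → ℝ} (h : ∀ Y Z W, psi U Y Z W = psi V Y Z W) : U = V := by
  have h0 := h (E 1) (E 2) (E 3)
  have h1 := h (E 2) (E 4) (E 6)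
  have h2 := h (E 3) (E 4) (E 5)
  have h3 := h (E 0) (E 1) (E 2)
  have h4 := h (E 2) (E 3) (E 5)
  have h5 := h (E 2) (E 3) (E 4)
  have h6 := h (E 1) (E 3) (E 5)
  simp [psi, w4, E, det_fin_four, det_fin_three] at h0 h1 h2 h3 h4 h5 h6
  funext i; fin_cases i <;> simp <;> linarith

namespace IsKoszul

variable {A B C : Matrix (Fin 4) (Fin 4) ℝ} {nabla : (Fin 7 → ℝ) → (Fin 7 → ℝ) → (Fin 7 → ℝ)}

theorem nabla_smul_left (hK : IsKoszul A B C nabla) (c : ℝ) (X Y : Fin 7 → ℝ) :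
    nabla (c • X) Y = c • nabla X Y :=
  inner7_left_injective fun Z => by
    rw [hK, inner7_smul_left, hK, bracket_smul_left, bracket_smul_right, inner7_smul_left,
      inner7_smul_right, inner7_smul_left]
    ring

theorem semiconj₂ (hK : IsKoszul A B C nabla) {g : (Fin 7 → ℝ) → (Fin 7 → ℝ)}
    (hg : Function.Surjective g) (hinner : ∀ X Y, inner7 (g X) (g Y) = inner7 X Y)
    (hbracket : Function.Semiconj₂ g (bracket A B C) (bracket A B C)) :
    Function.Semiconj₂ g nabla nabla := fun X Y =>
  inner7_left_injective fun Z => by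
    obtain ⟨Z, rfl⟩ := hg Z
    rw [hK, hinner, hK, ← hbracket.eq, ← hbracket.eq, ← hbracket.eq, hinner, hinner, hinner]

end IsKoszul

namespace IsFullTorsion

variable {nabla : (Fin 7 → ℝ) → (Fin 7 → ℝ) → (Fin 7 → ℝ)} {T : (Fin 7 → ℝ) → (Fin 7 → ℝ)}

theorem map_smul {A B C : Matrix (Fin 4) (Fin 4) ℝ} (hT : IsFullTorsion nabla T)
    (hK : IsKoszul A B C nabla) (c : ℝ) (X : Fin 7 → ℝ) : T (c • X) = c • T X :=
  psi_left_injective fun Y Z W => by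
    rw [← hT, psi_smul_left, ← hT]
    simp only [hK.nabla_smul_left, phi_smul_left, phi_smul_mid, phi_smul_right]
    ring

theorem commute (hT : IsFullTorsion nabla T) {g : (Fin 7 → ℝ) → (Fin 7 → ℝ)}
    (hg : Function.Surjective g) (hnabla : Function.Semiconj₂ g nabla nabla)
    (hphi : ∀ X Y Z, phi (g X) (g Y) (g Z) = phi X Y Z)
    (hpsi : ∀ X Y Z W, psi (g X) (g Y) (g Z) (g W) = psi X Y Z W) :
    Function.Commute T g := fun X =>
  psi_left_injective fun Y Z W => by
    obtain ⟨Y, rfl⟩ := hg Y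
    obtain ⟨Z, rfl⟩ := hg Z
    obtain ⟨W, rfl⟩ := hg W
    rw [← hT, hpsi, ← hT]
    simp only [← hnabla.eq, hphi]

end IsFullTorsion

theorem torsion_vanishes_on_a_n_general (A B C : Matrix (Fin 4) (Fin 4) ℝ)
    (nabla : (Fin 7 → ℝ) → (Fin 7 → ℝ) → (Fin 7 → ℝ))
    (hK : IsKoszul A B C nabla)
    (T : (Fin 7 → ℝ) → (Fin 7 → ℝ)) (hT : IsFullTorsion nabla T) :
    (∀ X ∈ aSub, ∀ Y ∈ nSub, Tbil T X Y = 0) ∧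
    (∀ X ∈ nSub, ∀ Y ∈ aSub, Tbil T X Y = 0) := by
  have hnabla : Function.Semiconj₂ negN nabla nabla :=
    hK.semiconj₂ negN_involutive.surjective
      (fun X Y => by rw [inner7_negN_left, negN_involutive]) (bracket_negN A B C · · |>.symm)
  have hcomm : Function.Commute T negN :=
    hT.commute negN_involutive.surjective hnabla phi_negN psi_negN
  refine ⟨fun X hX Y hY => ?_, fun X hX Y hY => ?_⟩
  · refine inner7_eq_zero_of_negN_eq_self_of_negN_eq_neg ?_ (negN_eq_neg_of_mem_nSub hY)
    rw [← hcomm.eq, negN_eq_self_of_mem_aSub hX]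
  · rw [Tbil, inner7_comm]
    refine inner7_eq_zero_of_negN_eq_self_of_negN_eq_neg (negN_eq_self_of_mem_aSub hY) ?_
    rw [← hcomm.eq, negN_eq_neg_of_mem_nSub hX, ← neg_one_smul ℝ X, hT.map_smul hK, neg_one_smul]

/-- the full torsion tensor of `(𝔤_{A,B,C}, φ)` vanishes on
`𝔞 × 𝔫` and on `𝔫 × 𝔞`. -/
theorem torsion_vanishes_on_a_n (A B C : Matrix (Fin 4) (Fin 4) ℝ)
    (hAB : A * B = B * A) (hAC : A * C = C * A) (hBC : B * C = C * B)
    (htA : Matrix.trace A = 0) (htB : Matrix.trace B = 0) (htC : Matrix.trace C = 0)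
    (nabla : (Fin 7 → ℝ) → (Fin 7 → ℝ) → (Fin 7 → ℝ))
    (hK : IsKoszul A B C nabla)
    (T : (Fin 7 → ℝ) → (Fin 7 → ℝ)) (hT : IsFullTorsion nabla T) :
    (∀ X ∈ aSub, ∀ Y ∈ nSub, Tbil T X Y = 0) ∧
    (∀ X ∈ nSub, ∀ Y ∈ aSub, Tbil T X Y = 0) :=
  torsion_vanishes_on_a_n_general A B C nabla hK T hT
end
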